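/- arXiv:2511.03304 — 6 statements merged into one kernel-verified Lean document; each statement's English description precedes it below -/
import Mathlib

section
/- Let n ∈ ℕ, α > 0, G ∈ ℝ^{n×n} and p ∈ ℝⁿ. Set K = G·Gᵀ, w = Gᵀ·(G·Gᵀ + α·I)⁻¹·p, and assume w ≠ 0. Let τ = (wᵀ·w)⁻¹, M = (K + α·I)⁻¹·p·τ·pᵀ·(K + α·I)⁻¹, and P = I − (wᵀ·w)⁻¹·w·wᵀ. Then G·P·Gᵀ = K·(I − M·K). (This is the single-step identity underlying the paper's Theorem 1: the kernel matrix of the null-space-projected empirical features equals a transformation expressible purely in terms of the original kernel matrix K.) -/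
open Matrix

lemma sandwich {n : ℕ} (B C : Matrix (Fin n) (Fin n) ℝ) (v : Fin n → ℝ) :
    B * vecMulVec v v * C = vecMulVec (B.mulVec v) (Cᵀ.mulVec v) := by
  ext i j
  simp only [mul_apply, vecMulVec_apply, mulVec, dotProduct, transpose_apply,
    Finset.sum_mul, Finset.mul_sum]
  apply Finset.sum_congr rfl
  intro k _
  apply Finset.sum_congr rfl
  intro l _
  ring

/-- Single-step identity underlying Theorem 1: the kernel matrix of the
null-space-projected empirical features equals a transformation expressible
purely in terms of the original kernel matrix `K`. -/
theorem stmt_0 (n : ℕ) (α : ℝ) (hα : 0 < α)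
    (G : Matrix (Fin n) (Fin n) ℝ) (p : Fin n → ℝ)
    (K : Matrix (Fin n) (Fin n) ℝ) (hK : K = G * Gᵀ)
    (w : Fin n → ℝ)
    (hw : w = Gᵀ.mulVec ((G * Gᵀ + α • (1 : Matrix (Fin n) (Fin n) ℝ))⁻¹.mulVec p))
    (hw0 : w ≠ 0)
    (τ : ℝ) (hτ : τ = (w ⬝ᵥ w)⁻¹)
    (M : Matrix (Fin n) (Fin n) ℝ)
    (hM : M = (K + α • 1)⁻¹ * (τ • vecMulVec p p) * (K + α • 1)⁻¹)
    (P : Matrix (Fin n) (Fin n) ℝ)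
    (hP : P = 1 - (w ⬝ᵥ w)⁻¹ • vecMulVec w w) :
    G * P * Gᵀ = K * (1 - M * K) := by
  subst hK hw hτ hM hP
  set A : Matrix (Fin n) (Fin n) ℝ := G * Gᵀ + α • 1 with hA
  have hAT : Aᵀ = A := by
    simp [hA, transpose_add, transpose_mul, transpose_smul, transpose_transpose]
  have hAinvT : (A⁻¹)ᵀ = A⁻¹ := by
    rw [transpose_nonsing_inv, hAT]
  set K : Matrix (Fin n) (Fin n) ℝ := G * Gᵀ with hKdef
  set w : Fin n → ℝ := Gᵀ.mulVec (A⁻¹.mulVec p) with hwdef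
  set τ : ℝ := (w ⬝ᵥ w)⁻¹ with hτdef
  have hGw : G.mulVec w = (K * A⁻¹).mulVec p := by
    rw [hwdef, ← mulVec_mulVec, ← mulVec_mulVec, mulVec_mulVec]
  have lhs : G * (1 - τ • vecMulVec w w) * Gᵀ
      = K - τ • vecMulVec ((K * A⁻¹).mulVec p) ((K * A⁻¹).mulVec p) := by
    have h : G * (1 - τ • vecMulVec w w) * Gᵀ
        = G * Gᵀ - τ • (G * vecMulVec w w * Gᵀ) := by
      rw [mul_sub, sub_mul, mul_one]
      congr 1
      rw [Matrix.mul_smul, Matrix.smul_mul]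
    rw [h, sandwich, transpose_transpose, hGw]
  have rhs : K * (1 - A⁻¹ * (τ • vecMulVec p p) * A⁻¹ * K)
      = K - τ • vecMulVec ((K * A⁻¹).mulVec p) ((K * A⁻¹).mulVec p) := by
    have h1 : K * (A⁻¹ * (τ • vecMulVec p p) * A⁻¹ * K)
        = τ • ((K * A⁻¹) * vecMulVec p p * (A⁻¹ * K)) := by
      simp only [Matrix.mul_smul, Matrix.smul_mul]
      congr 1
      simp only [Matrix.mul_assoc]
    have h2 : (A⁻¹ * K)ᵀ = K * A⁻¹ := by
      rw [transpose_mul, hAinvT]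
      congr 1
      rw [hKdef, transpose_mul, transpose_transpose]
    rw [mul_sub, mul_one, h1, sandwich, h2]
  rw [lhs, ← rhs]
end

section
/- Let n, l ∈ ℕ, α > 0, G ∈ ℝ^{n×n} and P ∈ ℝ^{n×l} (multiple protected attributes). Set K = G·Gᵀ, W = Gᵀ·(K + α·I)⁻¹·P ∈ ℝ^{n×l}, and assume Wᵀ·W ∈ ℝ^{l×l} is invertible. Let 𝒯 = (Wᵀ·W)⁻¹, M = (K + α·I)⁻¹·P·𝒯·Pᵀ·(K + α·I)⁻¹, and Π = I − W·(Wᵀ·W)⁻¹·Wᵀ. Then G·Π·Gᵀ = K·(I − M·K). -/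
open Matrix

/-- Multi-attribute extension of Theorem 1 (paper's appendix). -/
theorem stmt_1 (n l : ℕ) (α : ℝ) (hα : 0 < α)
    (G : Matrix (Fin n) (Fin n) ℝ) (P : Matrix (Fin n) (Fin l) ℝ)
    (K : Matrix (Fin n) (Fin n) ℝ) (hK : K = G * Gᵀ)
    (W : Matrix (Fin n) (Fin l) ℝ)
    (hW : W = Gᵀ * (K + α • (1 : Matrix (Fin n) (Fin n) ℝ))⁻¹ * P)
    (hWinv : IsUnit (Wᵀ * W).det)
    (𝒯 : Matrix (Fin l) (Fin l) ℝ) (h𝒯 : 𝒯 = (Wᵀ * W)⁻¹)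
    (M : Matrix (Fin n) (Fin n) ℝ)
    (hM : M = (K + α • 1)⁻¹ * P * 𝒯 * Pᵀ * (K + α • 1)⁻¹)
    (Proj : Matrix (Fin n) (Fin n) ℝ)
    (hProj : Proj = 1 - W * (Wᵀ * W)⁻¹ * Wᵀ) :
    G * Proj * Gᵀ = K * (1 - M * K) := by
  set A : Matrix (Fin n) (Fin n) ℝ := (K + α • 1)⁻¹ with hA
  have hKt : Kᵀ = K := by rw [hK, transpose_mul, transpose_transpose]
  have hAt : Aᵀ = A := by
    rw [hA, Matrix.transpose_nonsing_inv]
    congr 1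
    rw [transpose_add, hKt, transpose_smul, transpose_one]
  subst hProj hM h𝒯 hW
  rw [hK]
  simp only [Matrix.mul_sub, Matrix.sub_mul, Matrix.mul_one, Matrix.one_mul,
    transpose_mul, transpose_transpose, hAt, Matrix.mul_assoc]
end

section
/- Let n ∈ ℕ, α > 0, G ∈ ℝ^{n×n} and p ∈ ℝⁿ. Set K = G·Gᵀ, w = Gᵀ·(K + α·I)⁻¹·p, assume w ≠ 0, and let τ = (wᵀ·w)⁻¹ and M = (K + α·I)⁻¹·p·τ·pᵀ·(K + α·I)⁻¹. Then the transformed kernel matrix K·(I − M·K) is positive semidefinite. (Paper's Corollary 1: the transformed kernel matrix remains a valid kernel matrix.) -/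
open Matrix

/-- Paper's Corollary 1: the transformed kernel matrix remains positive
semidefinite, i.e., a valid kernel matrix. -/
theorem stmt_2 (n : ℕ) (α : ℝ) (hα : 0 < α)
    (G : Matrix (Fin n) (Fin n) ℝ) (p : Fin n → ℝ)
    (K : Matrix (Fin n) (Fin n) ℝ) (hK : K = G * Gᵀ)
    (w : Fin n → ℝ)
    (hw : w = Gᵀ.mulVec ((K + α • (1 : Matrix (Fin n) (Fin n) ℝ))⁻¹.mulVec p))
    (hw0 : w ≠ 0)
    (τ : ℝ) (hτ : τ = (w ⬝ᵥ w)⁻¹)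
    (M : Matrix (Fin n) (Fin n) ℝ)
    (hM : M = (K + α • 1)⁻¹ * (τ • vecMulVec p p) * (K + α • 1)⁻¹) :
    (K * (1 - M * K)).PosSemidef := by
  set A : Matrix (Fin n) (Fin n) ℝ := K + α • 1 with hA
  -- K is PSD
  have hKps : K.PosSemidef := by
    rw [hK, ← conjTranspose_eq_transpose_of_trivial]
    exact posSemidef_self_mul_conjTranspose G
  have hKt : Kᵀ = K := by rw [hK]; simp [transpose_mul]
  -- A is positive definite
  have hApd : A.PosDef := by
    refine Matrix.PosDef.posSemidef_add hKps ?_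
    rw [smul_one_eq_diagonal]
    exact posDef_diagonal_iff.mpr fun _ => hα
  have hdet : IsUnit A.det := (Matrix.isUnit_iff_isUnit_det _).1 hApd.isUnit
  have hAt : Aᵀ = A := by rw [hA]; simp [transpose_add, hKt, transpose_smul]
  have hAit : (A⁻¹)ᵀ = A⁻¹ := by rw [transpose_nonsing_inv, hAt]
  -- K commutes with A⁻¹
  have hKA : K * A = A * K := by
    rw [hA]; simp [Matrix.mul_add, Matrix.add_mul, Matrix.mul_smul, Matrix.smul_mul]
  have hcomm : K * A⁻¹ = A⁻¹ * K := by
    calc K * A⁻¹ = (A⁻¹ * A) * K * A⁻¹ := by rw [nonsing_inv_mul A hdet, one_mul]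
      _ = A⁻¹ * (A * K) * A⁻¹ := by rw [mul_assoc A⁻¹ A K]
      _ = A⁻¹ * (K * A) * A⁻¹ := by rw [hKA]
      _ = A⁻¹ * K * (A * A⁻¹) := by simp only [mul_assoc]
      _ = A⁻¹ * K := by rw [mul_nonsing_inv A hdet, mul_one]
  -- vecMulVec lemmas
  have hmulvv : ∀ (u v : Fin n → ℝ) (B : Matrix (Fin n) (Fin n) ℝ),
      B * vecMulVec u v = vecMulVec (B *ᵥ u) v := by
    intro u v B
    ext i j; simp [mul_apply, vecMulVec_apply, mulVec, dotProduct, Finset.sum_mul, mul_assoc]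
  have hvvmul : ∀ (u v : Fin n → ℝ) (B : Matrix (Fin n) (Fin n) ℝ),
      vecMulVec u v * B = vecMulVec u (v ᵥ* B) := by
    intro u v B
    ext i j; simp [mul_apply, vecMulVec_apply, vecMul, dotProduct, Finset.mul_sum, mul_assoc]
  set u : Fin n → ℝ := G *ᵥ w with hu
  -- key vector identities
  have hBp : (K * A⁻¹) *ᵥ p = u := by
    rw [← mulVec_mulVec, hu, hw, hK, ← mulVec_mulVec]
  have hpB : p ᵥ* (A⁻¹ * K) = u := by
    rw [← mulVec_transpose, transpose_mul, hKt, hAit, hBp]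
  -- key matrix identity
  have E : K * (1 - M * K) = K - τ • vecMulVec u u := by
    rw [Matrix.mul_sub, Matrix.mul_one, hM]
    congr 1
    calc K * ((A⁻¹ * (τ • vecMulVec p p) * A⁻¹) * K)
        = τ • ((K * A⁻¹) * vecMulVec p p * (A⁻¹ * K)) := by
          simp only [Matrix.mul_smul, Matrix.smul_mul, mul_assoc]
      _ = τ • vecMulVec u u := by rw [hmulvv, hvvmul, hBp, hpB]
  rw [E]
  -- positive semidefiniteness of the RHS
  have hvher : (vecMulVec u u).IsHermitian := by
    show (vecMulVec u u)ᴴ = vecMulVec u u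
    ext i j
    simp [vecMulVec_apply, conjTranspose_apply, mul_comm]
  have hsm : (τ • vecMulVec u u).IsHermitian := by
    show (τ • vecMulVec u u)ᴴ = τ • vecMulVec u u
    rw [conjTranspose_smul, hvher]
    simp
  refine posSemidef_iff_dotProduct_mulVec.mpr ⟨hKps.1.sub hsm, fun x => ?_⟩
  have hvvx : vecMulVec u u *ᵥ x = (u ⬝ᵥ x) • u := by
    ext i; simp [vecMulVec_apply, mulVec, dotProduct, Finset.sum_mul]
    exact Finset.sum_congr rfl fun _ _ => by ring
  have hstar : star x = x := by simp
  rw [hstar, sub_mulVec, dotProduct_sub, smul_mulVec, hvvx]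
  set y : Fin n → ℝ := Gᵀ *ᵥ x with hy
  have h1 : x ⬝ᵥ (K *ᵥ x) = y ⬝ᵥ y := by
    rw [hK, ← mulVec_mulVec, dotProduct_mulVec, ← mulVec_transpose]
  have h2 : x ⬝ᵥ u = y ⬝ᵥ w := by
    rw [hu, dotProduct_mulVec, ← mulVec_transpose]
  have h3 : u ⬝ᵥ x = y ⬝ᵥ w := by rw [dotProduct_comm, h2]
  have hc : (0:ℝ) < w ⬝ᵥ w := by
    have := dotProduct_star_self_pos_iff (v := w)
    simpa using this.mpr hw0
  have hcs : (y ⬝ᵥ w) ^ 2 ≤ (y ⬝ᵥ y) * (w ⬝ᵥ w) := by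
    have := Finset.sum_mul_sq_le_sq_mul_sq Finset.univ y w
    simpa [dotProduct, sq] using this
  rw [h1, dotProduct_smul, smul_eq_mul, dotProduct_smul, smul_eq_mul, h2, h3, hτ]
  nlinarith [mul_inv_cancel₀ hc.ne', hc.le, hcs, sq_nonneg (y ⬝ᵥ w)]
end

section
/- Let n, m ∈ ℕ, α > 0, G₀ ∈ ℝ^{n×n} and p ∈ ℝⁿ. Define iteratively for i = 0,…,m−1: wᵢ = G_(i)ᵀ·(G_(i)·G_(i)ᵀ + α·I)⁻¹·p, assume wᵢ ≠ 0, P_(i) = I − (wᵢᵀ·wᵢ)⁻¹·wᵢ·wᵢᵀ, and G_(i+1) = G_(i)·P_(i). Then the product ∏_{i=0}^{m−1} P_(i) is a projection matrix, i.e., it is symmetric and idempotent. (Paper's Lemma 1.) -/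
open Matrix

private lemma vmv_mul {n : ℕ} (u v x y : Fin n → ℝ) :
    vecMulVec u v * vecMulVec x y = (v ⬝ᵥ x) • vecMulVec u y := by
  ext i j; simp [mul_apply, vecMulVec_apply, dotProduct, Finset.sum_mul, Finset.mul_sum]
  apply Finset.sum_congr rfl; intros; ring

private lemma vmv_transpose {n : ℕ} (u v : Fin n → ℝ) :
    (vecMulVec u v)ᵀ = vecMulVec v u := by
  ext i j; simp [vecMulVec_apply, mul_comm]

private lemma vmv_mulVec {n : ℕ} (u v x : Fin n → ℝ) :
    (vecMulVec u v).mulVec x = (v ⬝ᵥ x) • u := by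
  ext i; simp [mulVec, vecMulVec_apply, dotProduct, Finset.mul_sum, Finset.sum_mul]
  apply Finset.sum_congr rfl; intros; ring

/-- Paper's Lemma 1: the product of the iteratively constructed null-space
projections is itself a projection matrix (symmetric and idempotent). -/
theorem stmt_3 (n m : ℕ) (α : ℝ) (hα : 0 < α)
    (G₀ : Matrix (Fin n) (Fin n) ℝ) (p : Fin n → ℝ)
    (G : ℕ → Matrix (Fin n) (Fin n) ℝ) (hG0 : G 0 = G₀)
    (w : ℕ → Fin n → ℝ)
    (hw : ∀ i < m, w i =
      (G i)ᵀ.mulVec ((G i * (G i)ᵀ + α • (1 : Matrix (Fin n) (Fin n) ℝ))⁻¹.mulVec p))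
    (hw0 : ∀ i < m, w i ≠ 0)
    (P : ℕ → Matrix (Fin n) (Fin n) ℝ)
    (hP : ∀ i < m, P i = 1 - (w i ⬝ᵥ w i)⁻¹ • vecMulVec (w i) (w i))
    (hGsucc : ∀ i < m, G (i + 1) = G i * P i) :
    (((List.range m).map P).prod)ᵀ = ((List.range m).map P).prod ∧
    ((List.range m).map P).prod * ((List.range m).map P).prod =
      ((List.range m).map P).prod := by
  set a : ℕ → Matrix (Fin n) (Fin n) ℝ :=
    fun i => (w i ⬝ᵥ w i)⁻¹ • vecMulVec (w i) (w i) with ha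
  have hdw : ∀ i < m, w i ⬝ᵥ w i ≠ 0 := fun i hi => by
    simpa [dotProduct_self_eq_zero] using hw0 i hi
  -- P i kills w i
  have hPwi : ∀ i < m, (P i).mulVec (w i) = 0 := by
    intro i hi
    rw [hP i hi, sub_mulVec, one_mulVec, smul_mulVec, vmv_mulVec,
      smul_smul, inv_mul_cancel₀ (hdw i hi), one_smul, sub_self]
  -- P i fixes vectors orthogonal to w i
  have hPfix : ∀ i < m, ∀ v : Fin n → ℝ, w i ⬝ᵥ v = 0 → (P i).mulVec v = v := by
    intro i hi v hv
    rw [hP i hi, sub_mulVec, one_mulVec, smul_mulVec, vmv_mulVec, hv,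
      zero_smul, smul_zero, sub_zero]
  -- key: G j annihilates earlier w's, and consequently the w's are orthogonal
  have key : ∀ j, j ≤ m → ∀ i < j, (G j).mulVec (w i) = 0 := by
    intro j
    induction j with
    | zero => intro _ i hi; omega
    | succ j ih =>
      intro hj i hi
      have hjm : j < m := by omega
      have hjle : j ≤ m := le_of_lt hjm
      have orth : ∀ i' < j, w i' ⬝ᵥ w j = 0 := by
        intro i' hi'
        rw [hw j hjm, dotProduct_mulVec, vecMul_transpose, ih hjle i' hi',
          zero_dotProduct]
      rw [hGsucc j hjm, ← mulVec_mulVec]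
      rcases Nat.lt_succ_iff_lt_or_eq.mp hi with hlt | heq
      · rw [hPfix j hjm (w i) (by rw [dotProduct_comm]; exact orth i hlt),
          ih hjle i hlt]
      · subst heq
        rw [hPwi i hjm, mulVec_zero]
  have orth : ∀ i j, i < j → j < m → w i ⬝ᵥ w j = 0 := by
    intro i j hij hjm
    rw [hw j hjm, dotProduct_mulVec, vecMul_transpose, key j (le_of_lt hjm) i hij,
      zero_dotProduct]
  -- products of the a's
  have haa : ∀ i < m, ∀ j < m, a i * a j = if i = j then a i else 0 := by
    intro i hi j hj
    rw [ha]
    simp only [smul_mul_smul_comm, vmv_mul]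
    rcases eq_or_ne i j with heq | hne
    · subst heq
      rw [if_pos rfl, smul_smul]
      congr 1
      field_simp
    · rw [if_neg hne]
      rcases lt_or_gt_of_ne hne with h | h
      · rw [orth i j h hj, zero_smul, smul_zero]
      · rw [dotProduct_comm (w i) (w j), orth j i h hi, zero_smul, smul_zero]
  -- product formula
  have hprod : ∀ k, k ≤ m →
      ((List.range k).map P).prod = 1 - ∑ i ∈ Finset.range k, a i := by
    intro k
    induction k with
    | zero => intro _; simp
    | succ k ih =>
      intro hk
      have hkm : k < m := by omega
      rw [List.range_succ, List.map_append, List.prod_append, ih (le_of_lt hkm),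
        List.map_singleton, List.prod_singleton, hP k hkm]
      have hSa : (∑ i ∈ Finset.range k, a i) * a k = 0 := by
        rw [Finset.sum_mul]
        apply Finset.sum_eq_zero
        intro i hik
        have hik' : i < k := Finset.mem_range.mp hik
        rw [haa i (by omega) k hkm, if_neg (by omega)]
      have : (1 : Matrix (Fin n) (Fin n) ℝ) - a k = 1 - a k := rfl
      rw [Finset.sum_range_succ]
      have expand : (1 - ∑ i ∈ Finset.range k, a i) * (1 - a k)
          = 1 - ((∑ i ∈ Finset.range k, a i) + a k)
            + (∑ i ∈ Finset.range k, a i) * a k := by noncomm_ring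
      rw [expand, hSa, add_zero]
  have hPm := hprod m le_rfl
  rw [hPm]
  constructor
  · rw [transpose_sub, transpose_one, transpose_sum]
    congr 1
    apply Finset.sum_congr rfl
    intro i _
    rw [ha]
    simp only [transpose_smul, vmv_transpose]
  · have hSS : (∑ i ∈ Finset.range m, a i) * (∑ j ∈ Finset.range m, a j)
        = ∑ i ∈ Finset.range m, a i := by
      rw [Finset.sum_mul]
      apply Finset.sum_congr rfl
      intro i hi
      have him : i < m := Finset.mem_range.mp hi
      rw [Finset.mul_sum]
      rw [Finset.sum_eq_single i]
      · rw [haa i him i him, if_pos rfl]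
      · intro j hj hji
        rw [haa i him j (Finset.mem_range.mp hj), if_neg (Ne.symm hji)]
      · intro h; exact absurd hi h
    have expand : (1 - ∑ i ∈ Finset.range m, a i) * (1 - ∑ i ∈ Finset.range m, a i)
        = 1 - (∑ i ∈ Finset.range m, a i) - (∑ i ∈ Finset.range m, a i)
          + (∑ i ∈ Finset.range m, a i) * (∑ i ∈ Finset.range m, a i) := by noncomm_ring
    rw [expand, hSS]
    abel
end

section
/- Let n, m ∈ ℕ, α > 0, G₀ ∈ ℝ^{n×n} and p ∈ ℝⁿ. Define iteratively for i = 0,…,m−1: K_(i) = G_(i)·G_(i)ᵀ, wᵢ = G_(i)ᵀ·(K_(i) + α·I)⁻¹·p, assume wᵢ ≠ 0, τᵢ = (wᵢᵀ·wᵢ)⁻¹, Mᵢ = (K_(i) + α·I)⁻¹·p·τᵢ·pᵀ·(K_(i) + α·I)⁻¹, T^{K_(i)} = I − Mᵢ·K_(i), P_(i) = I − (wᵢᵀ·wᵢ)⁻¹·wᵢ·wᵢᵀ, and G_(i+1) = G_(i)·P_(i). Then K_(m) = K_(0)·∏_{i=0}^{m−1} T^{K_(i)}, i.e., the iterated projected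 kernel matrix equals the original kernel matrix multiplied by the single combined transformation T_m = ∏_{i=0}^{m−1} T^{K_(i)}. -/
open Matrix

section aux
variable {n : ℕ}

lemma mul_vecMulVec' (Mt : Matrix (Fin n) (Fin n) ℝ) (a b : Fin n → ℝ) :
    Mt * vecMulVec a b = vecMulVec (Mt.mulVec a) b := by
  ext i j
  simp [vecMulVec_apply, mul_apply, mulVec, dotProduct, Finset.sum_mul, mul_assoc]

lemma vecMulVec_mul' (a b : Fin n → ℝ) (N : Matrix (Fin n) (Fin n) ℝ) :
    vecMulVec a b * N = vecMulVec a (Nᵀ.mulVec b) := by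
  ext i j
  simp [vecMulVec_apply, mul_apply, mulVec, dotProduct, Finset.mul_sum,
    mul_assoc, mul_comm, mul_left_comm]

lemma vecMulVec_mul_vecMulVec' (a b c d : Fin n → ℝ) :
    vecMulVec a b * vecMulVec c d = (b ⬝ᵥ c) • vecMulVec a d := by
  ext i j
  simp [vecMulVec_apply, mul_apply, dotProduct, Finset.sum_mul, Finset.mul_sum,
    mul_assoc, mul_comm, mul_left_comm]

lemma transpose_vecMulVec' (a b : Fin n → ℝ) : (vecMulVec a b)ᵀ = vecMulVec b a := by
  ext i j; simp [vecMulVec_apply, mul_comm]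

end aux

/-- The iterated projected kernel matrix equals the original kernel matrix
multiplied by the single combined transformation `T_m = ∏_{i<m} T^{K_(i)}`. -/
theorem stmt_14 (n m : ℕ) (α : ℝ) (hα : 0 < α)
    (G₀ : Matrix (Fin n) (Fin n) ℝ) (p : Fin n → ℝ)
    (G : ℕ → Matrix (Fin n) (Fin n) ℝ) (hG0 : G 0 = G₀)
    (K : ℕ → Matrix (Fin n) (Fin n) ℝ)
    (hKdef : ∀ i ≤ m, K i = G i * (G i)ᵀ)
    (w : ℕ → Fin n → ℝ)
    (hw : ∀ i < m, w i =
      (G i)ᵀ.mulVec ((K i + α • (1 : Matrix (Fin n) (Fin n) ℝ))⁻¹.mulVec p))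
    (hw0 : ∀ i < m, w i ≠ 0)
    (τ : ℕ → ℝ) (hτ : ∀ i < m, τ i = (w i ⬝ᵥ w i)⁻¹)
    (M : ℕ → Matrix (Fin n) (Fin n) ℝ)
    (hM : ∀ i < m, M i = (K i + α • 1)⁻¹ * (τ i • vecMulVec p p) * (K i + α • 1)⁻¹)
    (T : ℕ → Matrix (Fin n) (Fin n) ℝ)
    (hT : ∀ i < m, T i = 1 - M i * K i)
    (P : ℕ → Matrix (Fin n) (Fin n) ℝ)
    (hP : ∀ i < m, P i = 1 - (w i ⬝ᵥ w i)⁻¹ • vecMulVec (w i) (w i))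
    (hGsucc : ∀ i < m, G (i + 1) = G i * P i) :
    K m = K 0 * ((List.range m).map T).prod := by
  -- the one-step identity
  have step : ∀ i < m, K (i + 1) = K i * T i := by
    intro i hi
    set A : Matrix (Fin n) (Fin n) ℝ := K i + α • 1 with hA
    have hKi : K i = G i * (G i)ᵀ := hKdef i hi.le
    have hKs : (K i)ᵀ = K i := by rw [hKi, transpose_mul, transpose_transpose]
    have hAs : Aᵀ = A := by rw [hA, transpose_add, transpose_smul, transpose_one, hKs]
    have hAinvT : (A⁻¹)ᵀ = A⁻¹ := by rw [transpose_nonsing_inv, hAs]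
    have hc : (w i ⬝ᵥ w i) ≠ 0 := by
      simpa [dotProduct_self_eq_zero] using hw0 i hi
    set c : ℝ := (w i ⬝ᵥ w i) with hcdef
    set u : Fin n → ℝ := (K i * A⁻¹).mulVec p with hu
    -- G i applied to w i gives u
    have hGw : (G i).mulVec (w i) = u := by
      rw [hw i hi, mulVec_mulVec, mulVec_mulVec, ← hKi, ← hA, hu]
    -- LHS computation
    have hKsucc : K (i + 1) = K i - c⁻¹ • vecMulVec u u := by
      have h1 : K (i + 1) = G i * (P i * (P i)ᵀ) * (G i)ᵀ := by
        rw [hKdef (i + 1) hi, hGsucc i hi, transpose_mul]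
        rw [Matrix.mul_assoc, Matrix.mul_assoc, Matrix.mul_assoc]
      have hPs : (P i)ᵀ = P i := by
        rw [hP i hi, transpose_sub, transpose_one, transpose_smul, transpose_vecMulVec']
      have hPP : P i * (P i)ᵀ = 1 - c⁻¹ • vecMulVec (w i) (w i) := by
        rw [hPs, hP i hi]
        simp only [Matrix.sub_mul, Matrix.mul_sub, Matrix.one_mul, Matrix.mul_one,
          Matrix.mul_smul, Matrix.smul_mul, vecMulVec_mul_vecMulVec', smul_smul,
          ← hcdef]
        rw [inv_mul_cancel₀ hc, one_smul, sub_self, smul_zero, sub_zero]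
      rw [h1, hPP, Matrix.mul_sub, Matrix.sub_mul, Matrix.mul_one, ← hKi,
        Matrix.mul_smul, Matrix.smul_mul, mul_vecMulVec', vecMulVec_mul',
        transpose_transpose, hGw]
    -- RHS computation
    have hKMK : K i * M i * K i = c⁻¹ • vecMulVec u u := by
      rw [hM i hi, hτ i hi, ← hA, ← hcdef]
      have h2 : K i * (A⁻¹ * (c⁻¹ • vecMulVec p p) * A⁻¹) * K i
          = c⁻¹ • (K i * A⁻¹ * vecMulVec p p * (A⁻¹ * K i)) := by
        simp only [Matrix.mul_smul, Matrix.smul_mul]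
        congr 1
        simp only [Matrix.mul_assoc]
      rw [h2]
      congr 1
      rw [mul_vecMulVec', vecMulVec_mul', transpose_mul, hKs, hAinvT, hu]
    rw [hKsucc, hT i hi, Matrix.mul_sub, Matrix.mul_one, ← Matrix.mul_assoc, hKMK]
  -- induction
  have main : ∀ j, j ≤ m → K j = K 0 * ((List.range j).map T).prod := by
    intro j
    induction j with
    | zero => intro _; simp
    | succ j ih =>
      intro hj
      rw [step j hj, ih (Nat.le_of_succ_le hj), List.range_succ, List.map_append,
        List.prod_append, Matrix.mul_assoc]
      simp
  exact main m le_rfl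
end

section
/- Let n, m ∈ ℕ, α > 0, G₀ ∈ ℝ^{n×n} and p ∈ ℝⁿ. Define iteratively for i = 0,…,m−1: wᵢ = G_(i)ᵀ·(G_(i)·G_(i)ᵀ + α·I)⁻¹·p, assume wᵢ ≠ 0, P_(i) = I − (wᵢᵀ·wᵢ)⁻¹·wᵢ·wᵢᵀ, and G_(i+1) = G_(i)·P_(i). Then the vectors w₀,…,w_{m−1} are pairwise orthogonal: wᵢᵀ·wⱼ = 0 for all i ≠ j; moreover G_(j)·wᵢ = 0 for all i < j. (The successive ridge directions removed by the iterative null-space projection procedure are mutually orthogonal, and each projected representation annihilates all previously removed directions.) -/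
open Matrix

lemma vecMulVec_mulVec' {n : ℕ} (a b x : Fin n → ℝ) :
    (vecMulVec a b).mulVec x = (b ⬝ᵥ x) • a := by
  ext i
  simp [vecMulVec_apply, mulVec, dotProduct, Finset.mul_sum, Finset.sum_mul, mul_comm, mul_left_comm]

/-- The successive ridge directions removed by the iterative null-space
projection procedure are mutually orthogonal, and each projected
representation annihilates all previously removed directions. -/
theorem stmt_15 (n m : ℕ) (α : ℝ) (hα : 0 < α)
    (G₀ : Matrix (Fin n) (Fin n) ℝ) (p : Fin n → ℝ)
    (G : ℕ → Matrix (Fin n) (Fin n) ℝ) (hG0 : G 0 = G₀)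
    (w : ℕ → Fin n → ℝ)
    (hw : ∀ i < m, w i =
      (G i)ᵀ.mulVec ((G i * (G i)ᵀ + α • (1 : Matrix (Fin n) (Fin n) ℝ))⁻¹.mulVec p))
    (hw0 : ∀ i < m, w i ≠ 0)
    (P : ℕ → Matrix (Fin n) (Fin n) ℝ)
    (hP : ∀ i < m, P i = 1 - (w i ⬝ᵥ w i)⁻¹ • vecMulVec (w i) (w i))
    (hGsucc : ∀ i < m, G (i + 1) = G i * P i) :
    (∀ i < m, ∀ j < m, i ≠ j → w i ⬝ᵥ w j = 0) ∧
    (∀ i j, i < j → j ≤ m → (G j).mulVec (w i) = 0) := by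
  -- key lemma, by induction on j
  have key : ∀ j, j ≤ m → ∀ i, i < j → (G j).mulVec (w i) = 0 := by
    intro j
    induction j with
    | zero => intro _ i hi; omega
    | succ j ih =>
      intro hjm i hij
      have hjm' : j < m := hjm
      have hjm'' : j ≤ m := le_of_lt hjm'
      rw [hGsucc j hjm', ← Matrix.mulVec_mulVec]
      rcases Nat.lt_succ_iff_lt_or_eq.mp hij with h | h
      · -- i < j
        have hG : (G j).mulVec (w i) = 0 := ih hjm'' i h
        have hdot : w j ⬝ᵥ w i = 0 := by
          rw [hw j hjm', Matrix.mulVec_transpose, ← Matrix.dotProduct_mulVec, hG,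
            dotProduct_zero]
        have hPw : (P j).mulVec (w i) = w i := by
          rw [hP j hjm']
          rw [Matrix.sub_mulVec, Matrix.smul_mulVec, vecMulVec_mulVec', hdot]
          simp
        rw [hPw, hG]
      · subst h
        have hne : w i ⬝ᵥ w i ≠ 0 := by
          rw [Ne, dotProduct_self_eq_zero]
          exact hw0 i hjm'
        have hPw : (P i).mulVec (w i) = 0 := by
          rw [hP i hjm', Matrix.sub_mulVec, Matrix.smul_mulVec, vecMulVec_mulVec',
            smul_smul, inv_mul_cancel₀ hne]
          simp
        rw [hPw, Matrix.mulVec_zero]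
  have hlt : ∀ i j, i < j → j < m → w j ⬝ᵥ w i = 0 := by
    intro i j hij hjm
    rw [hw j hjm, Matrix.mulVec_transpose, ← Matrix.dotProduct_mulVec,
      key j (le_of_lt hjm) i hij, dotProduct_zero]
  refine ⟨?_, fun i j hij hjm => key j hjm i hij⟩
  intro i hi j hj hne
  rcases lt_or_gt_of_ne hne with h | h
  · rw [dotProduct_comm]; exact hlt i j h hj
  · exact hlt j i h hi
end
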